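/- arXiv:2106.14468 — 4 statements merged into one kernel-verified Lean document; each statement's English description precedes it below -/
import Mathlib

section
/- In the free pseudosolution setup, for every subspace A' with B ⊆ A' ⊆ A, the preimage under f̃ : ⋀²A → ⋀²(A+f(A)) of ⋀²(A+f(A')) equals ⋀²A'; that is, for e ∈ ⋀²A one has f̃(e) ∈ ⋀²(A+f(A')) if and only if e ∈ ⋀²A'. Consequently, if e₁, …, e_t ∈ ⋀²A are linearly independent modulo ⋀²A', then f̃(e₁), …, f̃(e_t) are linearly independent modulo ⋀²(A+f(A')). -/
/-!
Common notions: for a subspace `A` of an ambient `K`-vector space `M`, `wedge2 K A` is the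
image of the exterior square `⋀² A` inside the exterior algebra of `M` (the span of the
products `a ∧ b` for `a, b ∈ A`).  For subspaces `C`, `B`, `fdim K C B` (resp. `cdim K C B`)
is the dimension of `B` over `C`, i.e. of the quotient `B / (C ∩ B)`, as a natural number
(resp. as a cardinal), and `FinOver K C B` says that `B` is finite-dimensional over `C`.
Relative to a fixed subspace `N` of `⋀² M`, writing `N(X) := N ⊓ wedge2 K X`,
`pdim K N C B` is the relative predimension `δ(B/C) = dim(B/C) - dim(N(B)/N(C))` and
`pdim0 K N A = δ(A) = dim A - dim N(A)`.  `Strong K N B A` says that `B` is strong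
(self-sufficient) in `A`:  `δ(C/B) ≥ 0` (stated in the equivalent subtraction-free form
`dim(N(C)/N(B)) ≤ dim(C/B)`) for every intermediate subspace `C` finite-dimensional over
`B`; `MinStrong K N B A` says that `A` is a minimal strong extension of `B`.
-/

noncomputable section

universe u v

variable (K : Type u) [Field K] {M : Type v} [AddCommGroup M] [Module K M]

/-- The image of the exterior square `⋀² A` of a subspace `A` inside the exterior algebra
of the ambient space. -/
def wedge2 (A : Submodule K M) : Submodule K (ExteriorAlgebra K M) :=
  Submodule.span K
    {z | ∃ a ∈ A, ∃ b ∈ A, z = ExteriorAlgebra.ι K a * ExteriorAlgebra.ι K b}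

/-- The relative dimension `dim (B / C)`, as a natural number. -/
def fdim (C B : Submodule K M) : ℕ :=
  Module.finrank K (↥B ⧸ Submodule.comap B.subtype C)

/-- The relative dimension `dim (B / C)`, as a cardinal. -/
def cdim (C B : Submodule K M) : Cardinal :=
  Module.rank K (↥B ⧸ Submodule.comap B.subtype C)

/-- `B` is finite-dimensional over `C`. -/
def FinOver (C B : Submodule K M) : Prop :=
  Module.Finite K (↥B ⧸ Submodule.comap B.subtype C)

/-- The relative predimension `δ(B/C) = dim(B/C) - dim(N(B)/N(C))` with respect to `N`. -/
def pdim (N : Submodule K (ExteriorAlgebra K M)) (C B : Submodule K M) : ℤ :=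
  (fdim K C B : ℤ) - (fdim K (N ⊓ wedge2 K C) (N ⊓ wedge2 K B) : ℤ)

/-- The predimension `δ(A) = dim A - dim N(A)` with respect to `N`. -/
def pdim0 (N : Submodule K (ExteriorAlgebra K M)) (A : Submodule K M) : ℤ :=
  (Module.finrank K ↥A : ℤ) - (Module.finrank K ↥(N ⊓ wedge2 K A) : ℤ)

/-- `B` is strong (self-sufficient) in `A` with respect to `N`. -/
def Strong (N : Submodule K (ExteriorAlgebra K M)) (B A : Submodule K M) : Prop :=
  B ≤ A ∧ ∀ C : Submodule K M, B ≤ C → C ≤ A → FinOver K B C →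
    cdim K (N ⊓ wedge2 K B) (N ⊓ wedge2 K C) ≤ Cardinal.lift.{u} (cdim K B C)

/-- `A` is a minimal strong extension of `B` with respect to `N`. -/
def MinStrong (N : Submodule K (ExteriorAlgebra K M)) (B A : Submodule K M) : Prop :=
  Strong K N B A ∧ B < A ∧ ∀ C : Submodule K M, B < C → C < A → ¬ Strong K N C A


/-!
Membership in `⋀²A'` is detected by contractions: if `A` is finite-dimensional and
`e ∈ ⋀²A` has zero contraction `μ ⌋ e` with every functional `μ` vanishing on `A'`, then
`e ∈ ⋀²A'`. Indeed, adjoining one vector `a ∉ H` at a time, every element of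
`⋀²(H + K a)` has the form `h + a ∧ z` with `h ∈ ⋀²H`, `z ∈ H`, and contracting with a
functional dual to `a` over `H` returns `z`.

If `ν` vanishes on `A`, then `ν ⌋ f̃ e = (ν ∘ f) ⌋ e` for `e ∈ ⋀²A`. Freeness says that
`a ∈ A` and `f a ∈ A + f(A')` force `a ∈ A'`, so every `μ` vanishing on `A'` agrees on `A`
with `ν ∘ f` for some `ν` vanishing on `A + f(A')`. Hence `f̃ e ∈ ⋀²(A + f(A'))` gives
`μ ⌋ e = ν ⌋ f̃ e = 0` for all such `μ`, and so `e ∈ ⋀²A'`.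
-/

section Wedge2

variable {K : Type u} [Field K] {W : Type v} [AddCommGroup W] [Module K W]

open ExteriorAlgebra
open CliffordAlgebra (contractLeft contractLeft_ι_mul contractLeft_ι)

theorem wedge2_le_iff {A : Submodule K W} {N : Submodule K (ExteriorAlgebra K W)} :
    wedge2 K A ≤ N ↔ ∀ x ∈ A, ∀ y ∈ A, ι K x * ι K y ∈ N := by
  simp only [wedge2, Submodule.span_le, Set.subset_def, Set.mem_ofPred_eq, SetLike.mem_coe]
  constructor
  · exact fun h x hx y hy => h _ ⟨x, hx, y, hy, rfl⟩
  · rintro h _ ⟨x, hx, y, hy, rfl⟩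
    exact h x hx y hy

theorem ι_mul_ι_mem_wedge2 {A : Submodule K W} {x y : W} (hx : x ∈ A) (hy : y ∈ A) :
    ι K x * ι K y ∈ wedge2 K A :=
  wedge2_le_iff.mp le_rfl x hx y hy

theorem wedge2_mono {A B : Submodule K W} (h : A ≤ B) : wedge2 K A ≤ wedge2 K B :=
  wedge2_le_iff.mpr fun _ hx _ hy => ι_mul_ι_mem_wedge2 (h hx) (h hy)

theorem contractLeft_ι_mul_ι (μ : Module.Dual K W) (x y : W) :
    contractLeft (Q := 0) μ (ι K x * ι K y) = ι K (μ x • y - μ y • x) := by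
  rw [contractLeft_ι_mul, contractLeft_ι, Algebra.algebraMap_eq_smul_one, mul_smul_comm,
    mul_one, map_sub, map_smul, map_smul]

theorem contractLeft_eq_zero_of_mem_wedge2 {A : Submodule K W} {μ : Module.Dual K W}
    (hμ : μ ∈ A.dualAnnihilator) {e : ExteriorAlgebra K W} (he : e ∈ wedge2 K A) :
    contractLeft (Q := 0) μ e = 0 := by
  rw [Submodule.mem_dualAnnihilator] at hμ
  refine (wedge2_le_iff (N := LinearMap.ker (contractLeft μ))).mpr (fun x hx y hy => ?_) he
  simp [contractLeft_ι_mul_ι, hμ x hx, hμ y hy]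

theorem wedge2_sup_span_singleton_le (H : Submodule K W) (a : W) :
    wedge2 K (H ⊔ K ∙ a) ≤ wedge2 K H ⊔ H.map ((LinearMap.mulLeft K (ι K a)) ∘ₗ ι K) := by
  refine wedge2_le_iff.mpr fun x hx y hy => ?_
  obtain ⟨x₀, hx₀, _, hc, rfl⟩ := Submodule.mem_sup.mp hx
  obtain ⟨y₀, hy₀, _, hd, rfl⟩ := Submodule.mem_sup.mp hy
  obtain ⟨c, rfl⟩ := Submodule.mem_span_singleton.mp hc
  obtain ⟨d, rfl⟩ := Submodule.mem_span_singleton.mp hd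
  have hz : c • y₀ - d • x₀ ∈ H := H.sub_mem (H.smul_mem c hy₀) (H.smul_mem d hx₀)
  have key : ι K (x₀ + c • a) * ι K (y₀ + d • a)
      = ι K x₀ * ι K y₀ + ι K a * ι K (c • y₀ - d • x₀) := by
    have hswap : ι K x₀ * ι K a = -(ι K a * ι K x₀) :=
      eq_neg_of_add_eq_zero_left (ι_add_mul_swap x₀ a)
    simp only [map_add, map_sub, map_smul, add_mul, mul_add, mul_sub, smul_mul_assoc,
      mul_smul_comm, ι_sq_zero, smul_zero, add_zero, hswap, smul_neg]
    abel
  rw [key]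
  exact Submodule.add_mem_sup (ι_mul_ι_mem_wedge2 hx₀ hy₀) ⟨_, hz, rfl⟩

theorem mem_wedge2_of_contractLeft_eq_zero {H : Submodule K W} {a : W} {μ : Module.Dual K W}
    (hμH : μ ∈ H.dualAnnihilator) (hμa : μ a = 1) {e : ExteriorAlgebra K W}
    (he : e ∈ wedge2 K (H ⊔ K ∙ a)) (hμe : contractLeft (Q := 0) μ e = 0) :
    e ∈ wedge2 K H := by
  obtain ⟨h, hh, _, ⟨z, hz, rfl⟩, rfl⟩ :=
    Submodule.mem_sup.mp (wedge2_sup_span_singleton_le H a he)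
  have hιz : ι K z = 0 := by
    simpa [contractLeft_eq_zero_of_mem_wedge2 hμH hh, contractLeft_ι_mul_ι, hμa,
      (Submodule.mem_dualAnnihilator μ).mp hμH z hz] using hμe
  simpa [hιz] using hh

theorem mem_wedge2_of_forall_contractLeft_eq_zero (A : Submodule K W) (s : Finset W)
    {e : ExteriorAlgebra K W}
    (h : ∀ μ ∈ A.dualAnnihilator, contractLeft (Q := 0) μ e = 0)
    (he : e ∈ wedge2 K (A ⊔ Submodule.span K s)) : e ∈ wedge2 K A := by
  classical
  induction s using Finset.induction_on with
  | empty => simpa using he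
  | insert a s _ ih =>
    apply ih
    set H := A ⊔ Submodule.span K s
    have hsup : A ⊔ Submodule.span K ↑(insert a s) = H ⊔ K ∙ a := by
      rw [Finset.coe_insert, Submodule.span_insert, sup_left_comm, sup_comm]
    rw [hsup] at he
    by_cases ha : a ∈ H
    · rwa [sup_eq_left.mpr ((Submodule.span_singleton_le_iff_mem a H).mpr ha)] at he
    · obtain ⟨μ, hμa, hμH⟩ := H.exists_dual_map_eq_bot_of_notMem ha inferInstance
      have hμH' : (μ a)⁻¹ • μ ∈ H.dualAnnihilator := by
        rw [Submodule.mem_dualAnnihilator]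
        intro x hx
        simp [(Submodule.eq_bot_iff _).mp hμH _ (Submodule.mem_map_of_mem hx)]
      refine mem_wedge2_of_contractLeft_eq_zero hμH' (by simp [hμa]) he (h _ ?_)
      exact Submodule.dualAnnihilator_anti le_sup_left hμH'

theorem contractLeft_apply_eq_of_mem_wedge2 {A : Submodule K W} (f : W →ₗ[K] W)
    {F : ExteriorAlgebra K W →ₗ[K] ExteriorAlgebra K W}
    (hF : ∀ x y : W, F (ι K x * ι K y) = ι K (f x) * ι K y + ι K x * ι K (f y))
    {ν μ : Module.Dual K W} (hνA : ν ∈ A.dualAnnihilator) (hνμ : ∀ x ∈ A, ν (f x) = μ x)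
    {e : ExteriorAlgebra K W} (he : e ∈ wedge2 K A) :
    contractLeft (Q := 0) ν (F e) = contractLeft (Q := 0) μ e := by
  rw [Submodule.mem_dualAnnihilator] at hνA
  refine (wedge2_le_iff
    (N := LinearMap.eqLocus (contractLeft ν ∘ₗ F) (contractLeft μ))).mpr (fun x hx y hy => ?_) he
  rw [LinearMap.mem_eqLocus, LinearMap.comp_apply, hF, map_add, contractLeft_ι_mul_ι,
    contractLeft_ι_mul_ι, contractLeft_ι_mul_ι, hνA x hx, hνA y hy, hνμ x hx, hνμ y hy, ← map_add]
  congr 1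
  simp only [zero_smul, sub_zero, zero_sub]
  abel

end Wedge2

section Dual

variable {K : Type u} [Field K] {W : Type v} [AddCommGroup W] [Module K W]
  {W' : Type*} [AddCommGroup W'] [Module K W']

theorem exists_mem_dualAnnihilator_comp_eq {p : Submodule K W} {S : Submodule K W'}
    (g : W →ₗ[K] W') (μ : Module.Dual K W) (h : ∀ x ∈ p, g x ∈ S → μ x = 0) :
    ∃ ν ∈ S.dualAnnihilator, ∀ x ∈ p, ν (g x) = μ x := by
  have hμ : μ ∘ₗ p.subtype ∈ LinearMap.range (S.mkQ ∘ₗ g ∘ₗ p.subtype).dualMap := by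
    rw [LinearMap.range_dualMap_eq_dualAnnihilator_ker, Submodule.mem_dualAnnihilator]
    rintro ⟨x, hx⟩ hgx
    exact h x hx ((Submodule.Quotient.mk_eq_zero S).mp hgx)
  obtain ⟨φ, hφ⟩ := hμ
  refine ⟨φ ∘ₗ S.mkQ, (Submodule.mem_dualAnnihilator _).mpr fun y hy => ?_,
    fun x hx => LinearMap.congr_fun hφ ⟨x, hx⟩⟩
  simp [(Submodule.Quotient.mk_eq_zero S).mpr hy]

theorem eq_zero_of_sum_smul_apply_mem {U P : Submodule K W} {Q : Submodule K W'} (G : W →ₗ[K] W')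
    (hG : ∀ e ∈ U, G e ∈ Q → e ∈ P) {t : ℕ} (e : Fin t → W) (he : ∀ i, e i ∈ U)
    (hind : ∀ c : Fin t → K, ∑ i, c i • e i ∈ P → ∀ i, c i = 0)
    (c : Fin t → K) (hc : ∑ i, c i • G (e i) ∈ Q) : ∀ i, c i = 0 := by
  refine hind c (hG _ (U.sum_mem fun i _ => U.smul_mem _ (he i)) ?_)
  simpa only [map_sum, map_smul] using hc

end Dual

theorem mem_of_apply_mem_sup_map {K : Type u} [Field K] {W : Type v} [AddCommGroup W]
    [Module K W] {A B A' : Submodule K W} (f : W →ₗ[K] W)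
    (hgen : ∀ a ∈ A, f a ∈ A ⊔ Submodule.map f B → a ∈ B) (hBA' : B ≤ A') (hA'A : A' ≤ A)
    {a : W} (ha : a ∈ A) (hfa : f a ∈ A ⊔ Submodule.map f A') : a ∈ A' := by
  obtain ⟨u, hu, _, ⟨a', ha', rfl⟩, hfa⟩ := Submodule.mem_sup.mp hfa
  have hB : a - a' ∈ B := by
    refine hgen _ (A.sub_mem ha (hA'A ha')) ?_
    rw [map_sub, ← hfa, add_sub_cancel_right]
    exact Submodule.mem_sup_left hu
  simpa using A'.add_mem (hBA' hB) ha'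

theorem statement0_general {K : Type u} [Field K] {W : Type v} [AddCommGroup W] [Module K W]
    (A B : Submodule K W) [FiniteDimensional K ↥A]
    (f : W →ₗ[K] W)
    (hgen : ∀ a ∈ A, f a ∈ A ⊔ Submodule.map f B → a ∈ B)
    (F : ExteriorAlgebra K W →ₗ[K] ExteriorAlgebra K W)
    (hF : ∀ x y : W,
      F (ExteriorAlgebra.ι K x * ExteriorAlgebra.ι K y) =
        ExteriorAlgebra.ι K (f x) * ExteriorAlgebra.ι K y +
          ExteriorAlgebra.ι K x * ExteriorAlgebra.ι K (f y))
    (A' : Submodule K W) (hBA' : B ≤ A') (hA'A : A' ≤ A) :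
    (∀ e ∈ wedge2 K A,
        (F e ∈ wedge2 K (A ⊔ Submodule.map f A') ↔ e ∈ wedge2 K A')) ∧
    (∀ (t : ℕ) (e : Fin t → ExteriorAlgebra K W), (∀ i, e i ∈ wedge2 K A) →
      (∀ c : Fin t → K, (∑ i, c i • e i) ∈ wedge2 K A' → ∀ i, c i = 0) →
      (∀ c : Fin t → K, (∑ i, c i • F (e i)) ∈ wedge2 K (A ⊔ Submodule.map f A') →
        ∀ i, c i = 0)) := by
  set S := A ⊔ Submodule.map f A'
  have hmap : ∀ e ∈ wedge2 K A', F e ∈ wedge2 K S := by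
    refine fun e he => (wedge2_le_iff (N := (wedge2 K S).comap F)).mpr (fun x hx y hy => ?_) he
    have hfx : f x ∈ S := Submodule.mem_sup_right (Submodule.mem_map_of_mem hx)
    have hfy : f y ∈ S := Submodule.mem_sup_right (Submodule.mem_map_of_mem hy)
    rw [Submodule.mem_comap, hF]
    exact add_mem (ι_mul_ι_mem_wedge2 hfx (Submodule.mem_sup_left (hA'A hy)))
      (ι_mul_ι_mem_wedge2 (Submodule.mem_sup_left (hA'A hx)) hfy)
  have hpreimage : ∀ e ∈ wedge2 K A, F e ∈ wedge2 K S → e ∈ wedge2 K A' := by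
    intro e he hFe
    obtain ⟨s, hs⟩ := (Submodule.fg_iff_finiteDimensional A).mpr ‹_›
    refine mem_wedge2_of_forall_contractLeft_eq_zero A' s (fun μ hμ => ?_)
      (wedge2_mono (hs ▸ le_sup_right) he)
    obtain ⟨ν, hνS, hνμ⟩ := exists_mem_dualAnnihilator_comp_eq (p := A) (S := S) f μ
      fun x hx hfx => (Submodule.mem_dualAnnihilator μ).mp hμ x
        (mem_of_apply_mem_sup_map f hgen hBA' hA'A hx hfx)
    rw [← contractLeft_apply_eq_of_mem_wedge2 f hF
      (Submodule.dualAnnihilator_anti le_sup_left hνS) hνμ he]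
    exact contractLeft_eq_zero_of_mem_wedge2 hνS hFe
  exact ⟨fun e he => ⟨hpreimage e he, hmap e⟩,
    fun t e he hind => eq_zero_of_sum_smul_apply_mem F hpreimage e he hind⟩

/-- in the free pseudosolution setup, for every `B ⊆ A' ⊆ A` and every
`e ∈ ⋀²A`, one has `f̃ e ∈ ⋀²(A + f(A'))` iff `e ∈ ⋀²A'`; consequently families of
elements of `⋀²A` which are linearly independent modulo `⋀²A'` are sent by `f̃` to
families linearly independent modulo `⋀²(A + f(A'))`. -/
theorem statement0 {K : Type u} [Field K] {W : Type v} [AddCommGroup W] [Module K W]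
    (V A B : Submodule K W) [FiniteDimensional K ↥A]
    (hBA : B ≤ A) (hAV : A ≤ V)
    (f : W →ₗ[K] W) (hfB : ∀ b ∈ B, f b ∈ V)
    (hgen : ∀ a ∈ A, f a ∈ A ⊔ Submodule.map f B → a ∈ B)
    (F : ExteriorAlgebra K W →ₗ[K] ExteriorAlgebra K W)
    (hF : ∀ x y : W,
      F (ExteriorAlgebra.ι K x * ExteriorAlgebra.ι K y) =
        ExteriorAlgebra.ι K (f x) * ExteriorAlgebra.ι K y +
          ExteriorAlgebra.ι K x * ExteriorAlgebra.ι K (f y))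
    (A' : Submodule K W) (hBA' : B ≤ A') (hA'A : A' ≤ A) :
    (∀ e ∈ wedge2 K A,
        (F e ∈ wedge2 K (A ⊔ Submodule.map f A') ↔ e ∈ wedge2 K A')) ∧
    (∀ (t : ℕ) (e : Fin t → ExteriorAlgebra K W), (∀ i, e i ∈ wedge2 K A) →
      (∀ c : Fin t → K, (∑ i, c i • e i) ∈ wedge2 K A' → ∀ i, c i = 0) →
      (∀ c : Fin t → K, (∑ i, c i • F (e i)) ∈ wedge2 K (A ⊔ Submodule.map f A') →
        ∀ i, c i = 0)) :=
  statement0_general A B f hgen F hF A' hBA' hA'A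

end
end

section
/- In the free pseudosolution setup, assume f̃(N(B)) ⊆ N(B+f(B)), and set N' = N(A+f(B)) + f̃(N(A)), a subspace of ⋀²(A+f(A)). Then N' ∩ ⋀²(A+f(B)) = N(A+f(B)). -/
/-!
Common notions: for a subspace `A` of an ambient `K`-vector space `M`, `wedge2 K A` is the
image of the exterior square `⋀² A` inside the exterior algebra of `M` (the span of the
products `a ∧ b` for `a, b ∈ A`).  For subspaces `C`, `B`, `fdim K C B` (resp. `cdim K C B`)
is the dimension of `B` over `C`, i.e. of the quotient `B / (C ∩ B)`, as a natural number
(resp. as a cardinal), and `FinOver K C B` says that `B` is finite-dimensional over `C`.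
Relative to a fixed subspace `N` of `⋀² M`, writing `N(X) := N ⊓ wedge2 K X`,
`pdim K N C B` is the relative predimension `δ(B/C) = dim(B/C) - dim(N(B)/N(C))` and
`pdim0 K N A = δ(A) = dim A - dim N(A)`.  `Strong K N B A` says that `B` is strong
(self-sufficient) in `A`:  `δ(C/B) ≥ 0` (stated in the equivalent subtraction-free form
`dim(N(C)/N(B)) ≤ dim(C/B)`) for every intermediate subspace `C` finite-dimensional over
`B`; `MinStrong K N B A` says that `A` is a minimal strong extension of `B`.
-/

noncomputable section

universe u v

variable (K : Type u) [Field K] {M : Type v} [AddCommGroup M] [Module K M]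

namespace Statement1Aux

variable {K : Type u} [Field K] {W : Type v} [AddCommGroup W] [Module K W]

open ExteriorAlgebra

lemma wedge2_mono {X Y : Submodule K W} (h : X ≤ Y) : wedge2 K X ≤ wedge2 K Y :=
  Submodule.span_mono (by rintro z ⟨a, ha, b, hb, rfl⟩; exact ⟨a, h ha, b, h hb, rfl⟩)

/-- Contraction by a functional vanishing on `X` kills `wedge2 K X`. -/
lemma contract_eq_zero {X : Submodule K W} {φ : Module.Dual K W}
    (hφ : ∀ x ∈ X, φ x = 0) {z : ExteriorAlgebra K W} (hz : z ∈ wedge2 K X) :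
    CliffordAlgebra.contractLeft φ z = 0 := by
  induction hz using Submodule.span_induction with
  | mem z hz =>
    obtain ⟨a, ha, b, hb, rfl⟩ := hz
    rw [CliffordAlgebra.contractLeft_ι_mul, CliffordAlgebra.contractLeft_ι,
      hφ a ha, hφ b hb]
    simp
  | zero => simp
  | add x y hx hy ihx ihy => simp [ihx, ihy]
  | smul a x hx ih => simp [ih]

/-- Contraction of an element of `wedge2 K X` only depends on the restriction of the
functional to `X`. -/
lemma contract_congr {X : Submodule K W} {φ ψ : Module.Dual K W}
    (h : ∀ x ∈ X, φ x = ψ x) {z : ExteriorAlgebra K W} (hz : z ∈ wedge2 K X) :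
    CliffordAlgebra.contractLeft φ z = CliffordAlgebra.contractLeft ψ z := by
  induction hz using Submodule.span_induction with
  | mem z hz =>
    obtain ⟨a, ha, b, hb, rfl⟩ := hz
    rw [CliffordAlgebra.contractLeft_ι_mul, CliffordAlgebra.contractLeft_ι,
      CliffordAlgebra.contractLeft_ι_mul, CliffordAlgebra.contractLeft_ι,
      h a ha, h b hb]
  | zero => simp
  | add x y hx hy ihx ihy => simp [ihx, ihy]
  | smul a x hx ih => simp [ih]

/-- Key commutation: contracting `F z` by `φ` equals contracting `z` by `φ ∘ f`, when `φ`
vanishes on `X` and `z ∈ wedge2 K X`. -/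
lemma contract_F {f : W →ₗ[K] W} {F : ExteriorAlgebra K W →ₗ[K] ExteriorAlgebra K W}
    (hF : ∀ x y : W,
      F (ExteriorAlgebra.ι K x * ExteriorAlgebra.ι K y) =
        ExteriorAlgebra.ι K (f x) * ExteriorAlgebra.ι K y +
          ExteriorAlgebra.ι K x * ExteriorAlgebra.ι K (f y))
    {X : Submodule K W} {φ : Module.Dual K W} (hφ : ∀ x ∈ X, φ x = 0)
    {z : ExteriorAlgebra K W} (hz : z ∈ wedge2 K X) :
    CliffordAlgebra.contractLeft φ (F z) =
      CliffordAlgebra.contractLeft (φ.comp f) z := by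
  induction hz using Submodule.span_induction with
  | mem z hz =>
    obtain ⟨a, ha, b, hb, rfl⟩ := hz
    rw [hF a b, map_add, CliffordAlgebra.contractLeft_ι_mul,
      CliffordAlgebra.contractLeft_ι, CliffordAlgebra.contractLeft_ι_mul,
      CliffordAlgebra.contractLeft_ι, CliffordAlgebra.contractLeft_ι_mul,
      CliffordAlgebra.contractLeft_ι, hφ a ha, hφ b hb]
    simp [sub_eq_add_neg]
  | zero => simp
  | add x y hx hy ihx ihy => simp [ihx, ihy]
  | smul a x hx ih => simp [ih]

/-- If `A ≤ B' ⊔ span {c}`, then `wedge2 K A` decomposes. -/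
lemma wedge2_le_sup {A B' : Submodule K W} {c : W}
    (h : A ≤ B' ⊔ Submodule.span K {c}) :
    wedge2 K A ≤ wedge2 K B' ⊔
      Submodule.map ((LinearMap.mulRight K (ExteriorAlgebra.ι K c)).comp
        (ExteriorAlgebra.ι K : W →ₗ[K] ExteriorAlgebra K W)) B' := by
  rw [wedge2, Submodule.span_le]
  rintro z ⟨a, ha, b, hb, rfl⟩
  obtain ⟨a₁, ha₁, a₂, ha₂, rfl⟩ := Submodule.mem_sup.mp (h ha)
  obtain ⟨b₁, hb₁, b₂, hb₂, rfl⟩ := Submodule.mem_sup.mp (h hb)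
  obtain ⟨s, rfl⟩ := Submodule.mem_span_singleton.mp ha₂
  obtain ⟨t, rfl⟩ := Submodule.mem_span_singleton.mp hb₂
  have key : ExteriorAlgebra.ι K (a₁ + s • c) * ExteriorAlgebra.ι K (b₁ + t • c)
      = ExteriorAlgebra.ι K a₁ * ExteriorAlgebra.ι K b₁ +
        (((LinearMap.mulRight K (ExteriorAlgebra.ι K c)).comp
          (ExteriorAlgebra.ι K : W →ₗ[K] ExteriorAlgebra K W)) (t • a₁ - s • b₁)) := by
    have hswap : ExteriorAlgebra.ι K c * ExteriorAlgebra.ι K b₁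
        = - (ExteriorAlgebra.ι K b₁ * ExteriorAlgebra.ι K c) := by
      rw [eq_neg_iff_add_eq_zero, add_comm]
      exact ExteriorAlgebra.ι_add_mul_swap b₁ c
    have hcc : ExteriorAlgebra.ι K c * ExteriorAlgebra.ι K c = 0 :=
      ExteriorAlgebra.ι_sq_zero c
    have expand : (((LinearMap.mulRight K (ExteriorAlgebra.ι K c)).comp
          (ExteriorAlgebra.ι K : W →ₗ[K] ExteriorAlgebra K W)) (t • a₁ - s • b₁))
        = t • (ExteriorAlgebra.ι K a₁ * ExteriorAlgebra.ι K c)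
          - s • (ExteriorAlgebra.ι K b₁ * ExteriorAlgebra.ι K c) := by
      simp [LinearMap.comp_apply, LinearMap.mulRight_apply, map_sub, map_smul,
        smul_mul_assoc, sub_mul]
    rw [expand]
    simp only [map_add, map_smul, add_mul, mul_add, smul_mul_assoc, mul_smul_comm,
      hswap, hcc, smul_zero, smul_neg, smul_smul]
    abel
  rw [key]
  exact Submodule.add_mem _
    (Submodule.mem_sup_left (Submodule.subset_span ⟨a₁, ha₁, b₁, hb₁, rfl⟩))
    (Submodule.mem_sup_right ⟨t • a₁ - s • b₁,
      Submodule.sub_mem _ (Submodule.smul_mem _ _ ha₁) (Submodule.smul_mem _ _ hb₁), rfl⟩)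

/-- If every contraction by a functional vanishing on `B` kills `m ∈ wedge2 K A`, then
`m ∈ wedge2 K B`. -/
lemma mem_wedge2_of_contract (B : Submodule K W) :
    ∀ n : ℕ, ∀ A : Submodule K W, FiniteDimensional K ↥A → Module.finrank K ↥A ≤ n →
    ∀ m ∈ wedge2 K A,
    (∀ ψ : Module.Dual K W, (∀ b ∈ B, ψ b = 0) →
      CliffordAlgebra.contractLeft ψ m = 0) →
    m ∈ wedge2 K B := by
  intro n
  induction n with
  | zero =>
    intro A hfin hrank m hm _
    have : A = ⊥ := Submodule.finrank_eq_zero.mp (Nat.le_zero.mp hrank)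
    exact wedge2_mono (this ▸ bot_le) hm
  | succ n ih =>
    intro A hfin hrank m hm H
    by_cases hAB : A ≤ B
    · exact wedge2_mono hAB hm
    · obtain ⟨c, hcA, hcB⟩ := SetLike.not_le_iff_exists.mp hAB
      -- a functional vanishing on B with value 1 at c
      have hc0 : (Submodule.Quotient.mk c : W ⧸ B) ≠ 0 := by
        simpa [Submodule.Quotient.mk_eq_zero] using hcB
      obtain ⟨g, hg⟩ := LinearMap.exists_extend
        ((LinearEquiv.toSpanNonzeroSingleton K _ _ hc0).symm.toLinearMap)
      set φ : Module.Dual K W := g.comp B.mkQ with hφdef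
      have hφB : ∀ b ∈ B, φ b = 0 := by
        intro b hb
        simp [hφdef, (Submodule.Quotient.mk_eq_zero B).mpr hb]
      have hφc : φ c = 1 := by
        have h1 : φ c = g ((Submodule.span K {(Submodule.Quotient.mk c : W ⧸ B)}).subtype
            ⟨Submodule.Quotient.mk c, Submodule.mem_span_singleton_self _⟩) := rfl
        rw [h1, ← LinearMap.comp_apply, hg]
        exact LinearEquiv.coord_self K _ _ hc0
      set B' : Submodule K W := A ⊓ LinearMap.ker φ with hB'def
      have hB'A : B' ≤ A := inf_le_left
      have hB'φ : ∀ x ∈ B', φ x = 0 := fun x hx => hx.2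
      have hcB' : c ∉ B' := fun h => by
        have := hB'φ c h; rw [hφc] at this; exact one_ne_zero this
      have hAle : A ≤ B' ⊔ Submodule.span K {c} := by
        intro a ha
        have h1 : a - φ a • c ∈ B' := by
          refine ⟨Submodule.sub_mem _ ha (Submodule.smul_mem _ _ hcA), ?_⟩
          simp [LinearMap.mem_ker, map_sub, map_smul, hφc, smul_eq_mul]
        have : a = (a - φ a • c) + φ a • c := by abel
        rw [this]
        exact Submodule.add_mem _ (Submodule.mem_sup_left h1)
          (Submodule.mem_sup_right (Submodule.smul_mem _ _
            (Submodule.mem_span_singleton_self c)))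
      haveI hfinB' : FiniteDimensional K ↥B' := Submodule.finiteDimensional_of_le hB'A
      have hrank' : Module.finrank K ↥B' ≤ n := by
        have hlt : B' < A := lt_of_le_of_ne hB'A (fun h => hcB' (h ▸ hcA))
        have := Submodule.finrank_lt_finrank_of_lt hlt
        omega
      obtain ⟨m₀, hm₀, y, hy, rfl⟩ := Submodule.mem_sup.mp (wedge2_le_sup hAle hm)
      obtain ⟨b, hbB', rfl⟩ := hy
      -- contract by φ to show b = 0
      have hb0 : b = 0 := by
        have h1 := H φ hφB
        rw [map_add, contract_eq_zero hB'φ hm₀] at h1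
        rw [LinearMap.comp_apply, LinearMap.mulRight_apply,
          CliffordAlgebra.contractLeft_ι_mul, CliffordAlgebra.contractLeft_ι,
          hB'φ b hbB', hφc] at h1
        simp only [zero_add, zero_smul, map_one, mul_one, zero_sub, neg_eq_zero] at h1
        have hb1 : ExteriorAlgebra.ι K b = ExteriorAlgebra.ι K 0 := by simpa using h1
        exact (ExteriorAlgebra.ι_inj K b 0).mp hb1
      subst hb0
      simp only [map_zero, add_zero] at H ⊢
      exact ih B' hfinB' hrank' m₀ hm₀ H
lemma dummy : True := trivial

end Statement1Aux



/-- in the free pseudosolution setup, if `f̃(N(B)) ⊆ N(B + f(B))` and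
`N' = N(A+f(B)) + f̃(N(A))`, then `N' ∩ ⋀²(A+f(B)) = N(A+f(B))`. -/
theorem statement1 {K : Type u} [Field K] {W : Type v} [AddCommGroup W] [Module K W]
    (V A B : Submodule K W) [FiniteDimensional K ↥A]
    (hBA : B ≤ A) (hAV : A ≤ V)
    (f : W →ₗ[K] W) (hfB : ∀ b ∈ B, f b ∈ V)
    (hgen : ∀ a ∈ A, f a ∈ A ⊔ Submodule.map f B → a ∈ B)
    (F : ExteriorAlgebra K W →ₗ[K] ExteriorAlgebra K W)
    (hF : ∀ x y : W,
      F (ExteriorAlgebra.ι K x * ExteriorAlgebra.ι K y) =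
        ExteriorAlgebra.ι K (f x) * ExteriorAlgebra.ι K y +
          ExteriorAlgebra.ι K x * ExteriorAlgebra.ι K (f y))
    (N : Submodule K (ExteriorAlgebra K W)) (hNV : N ≤ wedge2 K V)
    (hNB : Submodule.map F (N ⊓ wedge2 K B) ≤ N ⊓ wedge2 K (B ⊔ Submodule.map f B)) :
    ((N ⊓ wedge2 K (A ⊔ Submodule.map f B)) ⊔ Submodule.map F (N ⊓ wedge2 K A)) ⊓
        wedge2 K (A ⊔ Submodule.map f B)
      = N ⊓ wedge2 K (A ⊔ Submodule.map f B) := by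
  classical
  set U : Submodule K W := A ⊔ Submodule.map f B with hUdef
  refine le_antisymm ?_ (le_inf (le_trans le_rfl le_sup_left) inf_le_right)
  rintro z hz
  rw [Submodule.mem_inf] at hz
  obtain ⟨hz1, hz2⟩ := hz
  obtain ⟨nn, hn, y, hy, rfl⟩ := Submodule.mem_sup.mp hz1
  obtain ⟨m, hm, rfl⟩ := hy
  have hnU : nn ∈ wedge2 K U := hn.2
  have hFmU : F m ∈ wedge2 K U := by
    have : F m = (nn + F m) - nn := by abel
    rw [this]
    exact Submodule.sub_mem _ hz2 hnU
  -- the contraction condition on m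
  have Hcontract : ∀ ψ : Module.Dual K W, (∀ b ∈ B, ψ b = 0) →
      CliffordAlgebra.contractLeft ψ m = 0 := by
    intro ψ hψ
    -- build φ vanishing on U with φ (f a) = ψ a for a ∈ A
    set h' : ↥A →ₗ[K] W ⧸ U := U.mkQ.comp (f.comp A.subtype) with hh'def
    set ψ' : ↥A →ₗ[K] K := ψ.comp A.subtype with hψ'def
    have hker : LinearMap.ker h' ≤ LinearMap.ker ψ' := by
      rintro ⟨a, ha⟩ hk
      have hfa : f a ∈ U := by
        simp only [hh'def, LinearMap.mem_ker, LinearMap.comp_apply,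
          Submodule.coe_subtype, Submodule.mkQ_apply, Submodule.subtype_apply,
          Submodule.Quotient.mk_eq_zero] at hk
        exact hk
      exact hψ a (hgen a ha hfa)
    set χ₀ : ↥(LinearMap.range h') →ₗ[K] K :=
      (Submodule.liftQ (LinearMap.ker h') ψ' hker).comp
        (h'.quotKerEquivRange.symm.toLinearMap) with hχ₀def
    obtain ⟨χ, hχ⟩ := LinearMap.exists_extend χ₀
    set φ : Module.Dual K W := χ.comp U.mkQ with hφdef
    have hφU : ∀ u ∈ U, φ u = 0 := by
      intro u hu
      simp [hφdef, (Submodule.Quotient.mk_eq_zero U).mpr hu]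
    have hφf : ∀ a ∈ A, φ (f a) = ψ a := by
      intro a ha
      have h1 : φ (f a) = χ ((LinearMap.range h').subtype ⟨h' ⟨a, ha⟩, ⟨⟨a, ha⟩, rfl⟩⟩) := by
        simp [hφdef, hh'def]
      rw [h1, ← LinearMap.comp_apply, hχ, hχ₀def]
      have h2 : (⟨h' ⟨a, ha⟩, ⟨⟨a, ha⟩, rfl⟩⟩ : ↥(LinearMap.range h'))
          = h'.quotKerEquivRange (Submodule.Quotient.mk ⟨a, ha⟩) := by
        exact Subtype.ext (LinearMap.quotKerEquivRange_apply_mk _ _).symm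
      rw [LinearMap.comp_apply, h2]
      simp [hψ'def]
    have hφA : ∀ x ∈ A, φ x = 0 := fun x hx => hφU x (Submodule.mem_sup_left hx)
    have e1 : CliffordAlgebra.contractLeft (φ.comp f) m = 0 := by
      rw [← Statement1Aux.contract_F hF hφA hm.2]
      exact Statement1Aux.contract_eq_zero hφU hFmU
    have e2 : CliffordAlgebra.contractLeft ψ m
        = CliffordAlgebra.contractLeft (φ.comp f) m :=
      Statement1Aux.contract_congr (fun x hx => (hφf x hx).symm) hm.2
    rw [e2, e1]
  have hmB : m ∈ wedge2 K B :=
    Statement1Aux.mem_wedge2_of_contract B (Module.finrank K ↥A) A inferInstance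
      le_rfl m hm.2 Hcontract
  have hFmN : F m ∈ N ⊓ wedge2 K (B ⊔ Submodule.map f B) :=
    hNB ⟨m, ⟨hm.1, hmB⟩, rfl⟩
  exact Submodule.mem_inf.mpr ⟨N.add_mem hn.1 hFmN.1, hz2⟩

end
end

section
/- In the free pseudosolution setup, assume f̃(N(B)) ⊆ N(B+f(B)), set N' = N(A+f(B)) + f̃(N(A)) ⊆ ⋀²(A+f(A)), and write N'(X) = N' ∩ ⋀²X for subspaces X of A+f(A). Then for every subspace A' with B ⊆ A' ⊆ A: (1) N'(A+f(A')) = N(A+f(B)) + f̃(N(A')); (2) for any family (e₁,…,e_t) in ⋀²A' which is a basis of N(A') modulo N(B), the family (f̃(e₁),…,f̃(e_t)) is a basis of N'(A+f(A')) modulo N(A+f(B)); (3) dim(N'(A+f(A'))/N(A+f(B))) = dim(N(A')/N(B)) and δ(A+f(A')/A+f(B)) = δ(A'/B), where the left-hand relative predimension is computed using N'. -/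
/-!
Common notions: for a subspace `A` of an ambient `K`-vector space `M`, `wedge2 K A` is the
image of the exterior square `⋀² A` inside the exterior algebra of `M` (the span of the
products `a ∧ b` for `a, b ∈ A`).  For subspaces `C`, `B`, `fdim K C B` (resp. `cdim K C B`)
is the dimension of `B` over `C`, i.e. of the quotient `B / (C ∩ B)`, as a natural number
(resp. as a cardinal), and `FinOver K C B` says that `B` is finite-dimensional over `C`.
Relative to a fixed subspace `N` of `⋀² M`, writing `N(X) := N ⊓ wedge2 K X`,
`pdim K N C B` is the relative predimension `δ(B/C) = dim(B/C) - dim(N(B)/N(C))` and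
`pdim0 K N A = δ(A) = dim A - dim N(A)`.  `Strong K N B A` says that `B` is strong
(self-sufficient) in `A`:  `δ(C/B) ≥ 0` (stated in the equivalent subtraction-free form
`dim(N(C)/N(B)) ≤ dim(C/B)`) for every intermediate subspace `C` finite-dimensional over
`B`; `MinStrong K N B A` says that `A` is a minimal strong extension of `B`.
-/

noncomputable section

universe u v

variable (K : Type u) [Field K] {M : Type v} [AddCommGroup M] [Module K M]

/-!
Everything rests on a freeness property of `f̃`: if `B ≤ A'' ≤ A`, `m ∈ ⋀²A` and
`f̃ m ∈ ⋀²(A + f(A''))`, then `m ∈ ⋀²A''`.  Membership in `⋀²A''` is detected by contractions: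
`m ∈ ⋀²A''` as soon as `ι_φ m = 0` for every linear form `φ` vanishing on `A''` (cut `A` down
by hyperplanes containing `A''`).  Since `f` induces an injection `A/A'' → M/(A + f(A''))`, such
a `φ` is `ψ ∘ f` on `A` for some `ψ` vanishing on `A + f(A'')`, and then
`ι_φ m = ι_ψ (f̃ m) = 0`.

Freeness gives (1) directly, and it says that `f̃` maps `N(A')` modulo `N(B)` injectively into
`N'(A + f(A'))` modulo `N(A + f(B))`; by (1) this map is onto, so bases modulo correspond,
which is (2) and the first half of (3).  The same argument for `f : A'/B → (A + f(A'))/(A + f(B))`,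
together with `N'(A + f(B)) = N(A + f(B))` (the case `A' = B` of (1)), gives the predimensions.
-/

variable {K}

open Submodule Module

section BasisModulo

variable {E E' E'' : Type*} [AddCommGroup E] [Module K E] [AddCommGroup E'] [Module K E']
  [AddCommGroup E''] [Module K E'']

theorem LinearMap.exists_comp_eq_of_ker_le (g : E →ₗ[K] E') (φ : E →ₗ[K] E'')
    (h : LinearMap.ker g ≤ LinearMap.ker φ) : ∃ ψ : E' →ₗ[K] E'', ψ ∘ₗ g = φ := by
  obtain ⟨ℓ, hℓ⟩ := ((LinearMap.ker g).liftQ g le_rfl).exists_leftInverse_of_injective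
    (ker_liftQ_eq_bot _ _ _ le_rfl)
  refine ⟨(LinearMap.ker g).liftQ φ h ∘ₗ ℓ, LinearMap.ext fun v => ?_⟩
  have := congr($hℓ ((LinearMap.ker g).mkQ v))
  simp only [LinearMap.comp_apply, mkQ_apply, liftQ_apply, LinearMap.id_apply] at this ⊢
  rw [this, liftQ_apply]

structure IsBasisMod (P Q : Submodule K E) {t : ℕ} (e : Fin t → E) : Prop where
  mem : ∀ i, e i ∈ Q
  eq_zero_of_sum_mem : ∀ c : Fin t → K, ∑ i, c i • e i ∈ P → ∀ i, c i = 0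
  le_sup_span : Q ≤ P ⊔ span K (Set.range e)

theorem fdim_eq_finrank_map_mkQ (P Q : Submodule K E) : fdim K P Q = finrank K (Q.map P.mkQ) := by
  have e := (P.mkQ ∘ₗ Q.subtype).quotKerEquivRange
  rw [LinearMap.ker_comp, ker_mkQ, LinearMap.range_comp, range_subtype] at e
  exact e.finrank_eq

theorem linearIndependent_mkQ_comp_iff {P : Submodule K E} {t : ℕ} {e : Fin t → E} :
    LinearIndependent K (P.mkQ ∘ e) ↔ ∀ c : Fin t → K, ∑ i, c i • e i ∈ P → ∀ i, c i = 0 := by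
  simp only [Fintype.linearIndependent_iff, Function.comp_apply, ← map_smul, ← map_sum]
  simp only [mkQ_apply, Quotient.mk_eq_zero]

theorem IsBasisMod.map_mkQ_eq_span {P Q : Submodule K E} {t : ℕ} {e : Fin t → E}
    (he : IsBasisMod P Q e) : Q.map P.mkQ = span K (Set.range (P.mkQ ∘ e)) := by
  refine le_antisymm ?_ (span_le.2 ?_)
  · calc Q.map P.mkQ ≤ (P ⊔ span K (Set.range e)).map P.mkQ := map_mono he.le_sup_span
      _ = span K (Set.range (P.mkQ ∘ e)) := by
        rw [Submodule.map_sup, mkQ_map_self, bot_sup_eq, map_span, Set.range_comp]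
  · rintro _ ⟨i, rfl⟩
    exact mem_map_of_mem (he.mem i)

theorem IsBasisMod.fdim_eq {P Q : Submodule K E} {t : ℕ} {e : Fin t → E}
    (he : IsBasisMod P Q e) : fdim K P Q = t := by
  rw [fdim_eq_finrank_map_mkQ, he.map_mkQ_eq_span,
    finrank_span_eq_card (linearIndependent_mkQ_comp_iff.2 he.eq_zero_of_sum_mem), Fintype.card_fin]

theorem exists_isBasisMod (P Q : Submodule K E) [FiniteDimensional K Q] :
    ∃ (t : ℕ) (e : Fin t → E), IsBasisMod P Q e := by
  let b := Module.finBasis K (Q.map P.mkQ)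
  choose e he hb using fun i => (b i).2
  have hli : LinearIndependent K (P.mkQ ∘ e) := by
    simpa [Function.comp_def, hb] using b.linearIndependent.map' _ (ker_subtype _)
  refine ⟨_, e, he, linearIndependent_mkQ_comp_iff.1 hli, fun x hx => ?_⟩
  have hspan : P.mkQ x ∈ span K (Set.range (P.mkQ ∘ e)) := by
    have := mem_map_of_mem (f := (Q.map P.mkQ).subtype) (b.mem_span ⟨P.mkQ x, mem_map_of_mem hx⟩)
    rwa [map_span, ← Set.range_comp, show (Q.map P.mkQ).subtype ∘ b = P.mkQ ∘ e from
      funext fun i => (hb i).symm] at this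
  rw [Set.range_comp, ← map_span] at hspan
  obtain ⟨y, hy, hxy⟩ := hspan
  rw [← sub_add_cancel x y]
  exact add_mem_sup ((Submodule.Quotient.eq P).1 hxy.symm) hy

theorem IsBasisMod.map {P Q : Submodule K E} {P' Q' : Submodule K E'} {t : ℕ} {e : Fin t → E}
    (he : IsBasisMod P Q e) (g : E →ₗ[K] E') (hg : ∀ x ∈ Q, g x ∈ P' → x ∈ P)
    (hP : P.map g ≤ P') (hQ : Q' = P' ⊔ Q.map g) : IsBasisMod P' Q' fun i => g (e i) where
  mem i := hQ ▸ mem_sup_right (mem_map_of_mem (he.mem i))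
  eq_zero_of_sum_mem c hc := by
    simp only [← map_smul, ← map_sum] at hc
    exact he.eq_zero_of_sum_mem c
      (hg _ (sum_mem fun i _ => smul_mem _ _ (he.mem i)) hc)
  le_sup_span := by
    calc Q' = P' ⊔ Q.map g := hQ
      _ ≤ P' ⊔ (P ⊔ span K (Set.range e)).map g := sup_le_sup_left (map_mono he.le_sup_span) _
      _ ≤ P' ⊔ span K (Set.range fun i => g (e i)) := by
        rw [Submodule.map_sup, ← sup_assoc, sup_eq_left.2 hP, map_span, ← Set.range_comp]
        rfl

theorem fdim_eq_of_map {P Q : Submodule K E} {P' Q' : Submodule K E'} [FiniteDimensional K Q]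
    (g : E →ₗ[K] E') (hg : ∀ x ∈ Q, g x ∈ P' → x ∈ P) (hP : P.map g ≤ P')
    (hQ : Q' = P' ⊔ Q.map g) : fdim K P' Q' = fdim K P Q := by
  obtain ⟨t, e, he⟩ := exists_isBasisMod P Q
  rw [(he.map g hg hP hQ).fdim_eq, he.fdim_eq]

end BasisModulo

section Wedge2

open ExteriorAlgebra

variable {X Y : Submodule K M}

theorem wedge2_le {P : Submodule K (ExteriorAlgebra K M)}
    (h : ∀ a ∈ X, ∀ b ∈ X, ι K a * ι K b ∈ P) : wedge2 K X ≤ P :=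
  span_le.2 fun _ ⟨a, ha, b, hb, hz⟩ => hz ▸ h a ha b hb

theorem ι_mul_ι_mem_wedge2_s2 {a b : M} (ha : a ∈ X) (hb : b ∈ X) : ι K a * ι K b ∈ wedge2 K X :=
  subset_span ⟨a, ha, b, hb, rfl⟩

theorem wedge2_mono_s2 (h : X ≤ Y) : wedge2 K X ≤ wedge2 K Y :=
  wedge2_le fun _ ha _ hb => ι_mul_ι_mem_wedge2_s2 (h ha) (h hb)

theorem wedge2_eq_mul (X : Submodule K M) : wedge2 K X = X.map (ι K) * X.map (ι K) :=
  le_antisymm (wedge2_le fun _ ha _ hb => mul_mem_mul (mem_map_of_mem ha) (mem_map_of_mem hb))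
    (mul_le.2 fun _ ⟨_, ha, hx⟩ _ ⟨_, hb, hy⟩ => hx ▸ hy ▸ ι_mul_ι_mem_wedge2_s2 ha hb)

instance [FiniteDimensional K X] : FiniteDimensional K (wedge2 K X) := by
  have hX : (X.map (ι K)).FG := (fg_iff_finiteDimensional _).2 inferInstance
  exact (fg_iff_finiteDimensional _).1 (wedge2_eq_mul X ▸ hX.mul hX)

theorem wedge2_sup_span_singleton_le_s2 (X : Submodule K M) (x : M) :
    wedge2 K (X ⊔ span K {x}) ≤ wedge2 K X ⊔ X.map (LinearMap.mulRight K (ι K x) ∘ₗ ι K) := by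
  refine wedge2_le fun a ha b hb => ?_
  obtain ⟨a', ha', _, has, rfl⟩ := mem_sup.1 ha
  obtain ⟨b', hb', _, hbs, rfl⟩ := mem_sup.1 hb
  obtain ⟨s, rfl⟩ := mem_span_singleton.1 has
  obtain ⟨t, rfl⟩ := mem_span_singleton.1 hbs
  have hswap : ι K x * ι K b' = -(ι K b' * ι K x) :=
    eq_neg_of_add_eq_zero_left (ι_add_mul_swap x b')
  have : ι K (a' + s • x) * ι K (b' + t • x) =
      ι K a' * ι K b' + ι K (t • a' - s • b') * ι K x := by
    simp only [map_add, map_smul, map_sub, add_mul, mul_add, smul_mul_assoc, mul_smul_comm,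
      ι_sq_zero, smul_zero, add_zero, sub_mul, hswap]
    module
  rw [this]
  exact add_mem_sup (ι_mul_ι_mem_wedge2_s2 ha' hb')
    (mem_map_of_mem (sub_mem (smul_mem _ _ ha') (smul_mem _ _ hb')))

def contract : Dual K M →ₗ[K] ExteriorAlgebra K M →ₗ[K] ExteriorAlgebra K M :=
  CliffordAlgebra.contractLeft (Q := 0)

theorem contract_ι_mul_ι (φ : Dual K M) (a b : M) :
    contract φ (ι K a * ι K b) = φ a • ι K b - φ b • ι K a := by
  rw [contract, CliffordAlgebra.contractLeft_ι_mul, CliffordAlgebra.contractLeft_ι,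
    ← Algebra.commutes, ← Algebra.smul_def]

theorem contract_eq_zero_of_mem_wedge2 {φ : Dual K M} (hφ : ∀ v ∈ X, φ v = 0)
    {m : ExteriorAlgebra K M} (hm : m ∈ wedge2 K X) : contract φ m = 0 :=
  wedge2_le (P := LinearMap.ker (contract φ))
    (fun a ha b hb => by simp [contract_ι_mul_ι, hφ a ha, hφ b hb]) hm

theorem contract_eq_of_eqOn {φ φ' : Dual K M} (h : ∀ v ∈ X, φ v = φ' v)
    {m : ExteriorAlgebra K M} (hm : m ∈ wedge2 K X) : contract φ m = contract φ' m := by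
  rw [← sub_eq_zero, ← LinearMap.sub_apply, ← map_sub]
  exact contract_eq_zero_of_mem_wedge2 (fun v hv => by simp [h v hv]) hm

theorem mem_wedge2_of_mem_wedge2_sup_span {φ : Dual K M} {x : M} (hφ : ∀ v ∈ X, φ v = 0)
    (hφx : φ x = 1) {m : ExteriorAlgebra K M} (hm : m ∈ wedge2 K (X ⊔ span K {x}))
    (h : contract φ m = 0) : m ∈ wedge2 K X := by
  obtain ⟨y, hy, _, ⟨v, hv, rfl⟩, rfl⟩ := mem_sup.1 (wedge2_sup_span_singleton_le_s2 X x hm)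
  have hv0 : v = 0 := by
    rw [map_add, contract_eq_zero_of_mem_wedge2 hφ hy, zero_add, LinearMap.comp_apply,
      LinearMap.mulRight_apply, contract_ι_mul_ι, hφ v hv, hφx] at h
    simpa using h
  simpa [hv0] using hy

theorem mem_wedge2_of_forall_contract_eq_zero [FiniteDimensional K Y] (hXY : X ≤ Y)
    {m : ExteriorAlgebra K M} (hm : m ∈ wedge2 K Y)
    (h : ∀ φ : Dual K M, (∀ v ∈ X, φ v = 0) → contract φ m = 0) : m ∈ wedge2 K X := by
  induction hn : finrank K Y using Nat.strong_induction_on generalizing Y with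
  | _ n ih =>
  by_cases hYX : Y ≤ X
  · exact wedge2_mono_s2 hYX hm
  obtain ⟨x, hxY, hxX⟩ := SetLike.not_le_iff_exists.1 hYX
  obtain ⟨φ, hφX, hφx⟩ := (0 : X →ₗ[K] K).exists_extend_of_notMem hxX 1
  have hφX' : ∀ v ∈ X, φ v = 0 := fun v hv => congr($hφX ⟨v, hv⟩)
  let Y₁ := Y ⊓ LinearMap.ker φ
  have hY : Y ≤ Y₁ ⊔ span K {x} := fun a ha => by
    rw [← sub_add_cancel a (φ a • x)]
    refine add_mem_sup ⟨sub_mem ha (smul_mem _ _ hxY), ?_⟩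
      (smul_mem _ _ (mem_span_singleton_self x))
    simp [hφx]
  have hY₁ : Y₁ < Y :=
    SetLike.lt_iff_le_and_exists.2 ⟨inf_le_left, x, hxY, fun h => by simpa [hφx] using h.2⟩
  exact ih _ (hn ▸ finrank_lt_finrank_of_lt hY₁) (le_inf hXY hφX')
    (mem_wedge2_of_mem_wedge2_sup_span (X := Y₁) (fun v hv => hv.2) hφx (wedge2_mono_s2 hY hm)
      (h φ hφX')) rfl

end Wedge2

section Tilde

open ExteriorAlgebra

/-- `F` agrees on `⋀²` with the map `f̃ : x ∧ y ↦ f x ∧ y + x ∧ f y`. -/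
def IsWedgeTilde (f : M →ₗ[K] M) (F : ExteriorAlgebra K M →ₗ[K] ExteriorAlgebra K M) : Prop :=
  ∀ x y : M, F (ι K x * ι K y) = ι K (f x) * ι K y + ι K x * ι K (f y)

/-- `f` induces an injective map `A/B → M/(A + f(B))`. -/
def IsFreePseudosolution (f : M →ₗ[K] M) (B A : Submodule K M) : Prop :=
  ∀ a ∈ A, f a ∈ A ⊔ B.map f → a ∈ B

variable {f : M →ₗ[K] M} {F : ExteriorAlgebra K M →ₗ[K] ExteriorAlgebra K M}
  {A B A' : Submodule K M}

theorem IsWedgeTilde.map_wedge2_le (hF : IsWedgeTilde f F) (X : Submodule K M) :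
    (wedge2 K X).map F ≤ wedge2 K (X ⊔ X.map f) :=
  map_le_iff_le_comap.2 <| wedge2_le fun a ha b hb => by
    rw [mem_comap, hF]
    exact add_mem (ι_mul_ι_mem_wedge2_s2 (mem_sup_right (mem_map_of_mem ha)) (mem_sup_left hb))
      (ι_mul_ι_mem_wedge2_s2 (mem_sup_left ha) (mem_sup_right (mem_map_of_mem hb)))

theorem IsWedgeTilde.contract_apply (hF : IsWedgeTilde f F) {X : Submodule K M}
    {ψ : Dual K M} (hψ : ∀ v ∈ X, ψ v = 0) {m : ExteriorAlgebra K M} (hm : m ∈ wedge2 K X) :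
    contract ψ (F m) = contract (ψ ∘ₗ f) m :=
  wedge2_le (P := LinearMap.eqLocus (contract ψ ∘ₗ F) (contract (ψ ∘ₗ f)))
    (fun a ha b hb => by
      rw [LinearMap.mem_eqLocus, LinearMap.comp_apply, hF a b, map_add, contract_ι_mul_ι,
        contract_ι_mul_ι, contract_ι_mul_ι]
      simp [hψ a ha, hψ b hb, sub_eq_add_neg]) hm

theorem mem_wedge2_of_map_mem_wedge2 [FiniteDimensional K A] (hF : IsWedgeTilde f F)
    (hBA : B ≤ A) (hfree : IsFreePseudosolution f B A) {m : ExteriorAlgebra K M}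
    (hm : m ∈ wedge2 K A) (hFm : F m ∈ wedge2 K (A ⊔ B.map f)) : m ∈ wedge2 K B := by
  refine mem_wedge2_of_forall_contract_eq_zero hBA hm fun φ hφ => ?_
  set S := A ⊔ B.map f
  obtain ⟨χ, hχ⟩ := (S.mkQ ∘ₗ f ∘ₗ A.subtype).exists_comp_eq_of_ker_le (φ ∘ₗ A.subtype)
    fun a ha => hφ a (hfree a a.2 (by simpa [Quotient.mk_eq_zero] using ha))
  let ψ := χ ∘ₗ S.mkQ
  have hψ : ∀ s ∈ S, ψ s = 0 := fun s hs => by simp [ψ, (Quotient.mk_eq_zero S).2 hs]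
  have hψf : ∀ a ∈ A, (ψ ∘ₗ f) a = φ a := fun a ha => congr($hχ ⟨a, ha⟩)
  rw [← contract_eq_of_eqOn hψf hm, ← hF.contract_apply (fun a ha => hψ a (mem_sup_left ha)) hm]
  exact contract_eq_zero_of_mem_wedge2 hψ hFm

theorem IsFreePseudosolution.mono (hfree : IsFreePseudosolution f B A) (hBA' : B ≤ A')
    (hA'A : A' ≤ A) : IsFreePseudosolution f A' A := by
  intro a ha hfa
  obtain ⟨x, hx, _, ⟨a', ha', rfl⟩, hxa⟩ := mem_sup.1 hfa
  have hB : a - a' ∈ B := hfree _ (sub_mem ha (hA'A ha')) <| by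
    rw [map_sub, ← hxa, add_sub_cancel_right]
    exact mem_sup_left hx
  simpa using add_mem (hBA' hB) ha'

theorem inf_wedge2_sup_map_eq [FiniteDimensional K A] (hF : IsWedgeTilde f F)
    (hfree : IsFreePseudosolution f B A) (hBA' : B ≤ A') (hA'A : A' ≤ A)
    (N : Submodule K (ExteriorAlgebra K M)) :
    ((N ⊓ wedge2 K (A ⊔ B.map f)) ⊔ (N ⊓ wedge2 K A).map F) ⊓ wedge2 K (A ⊔ A'.map f) =
      (N ⊓ wedge2 K (A ⊔ B.map f)) ⊔ (N ⊓ wedge2 K A').map F := by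
  have hSS' : wedge2 K (A ⊔ B.map f) ≤ wedge2 K (A ⊔ A'.map f) :=
    wedge2_mono_s2 (sup_le_sup_left (map_mono hBA') A)
  refine le_antisymm ?_ (sup_le (le_inf le_sup_left (inf_le_right.trans hSS')) (le_inf ?_ ?_))
  · rintro _ ⟨hn, hnS'⟩
    obtain ⟨s, hs, _, ⟨m, hm, rfl⟩, rfl⟩ := mem_sup.1 hn
    have hFm : F m ∈ wedge2 K (A ⊔ A'.map f) := by simpa using sub_mem hnS' (hSS' hs.2)
    exact add_mem_sup hs (mem_map_of_mem
      ⟨hm.1, mem_wedge2_of_map_mem_wedge2 hF hA'A (hfree.mono hBA' hA'A) hm.2 hFm⟩)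
  · exact le_sup_of_le_right (map_mono (inf_le_inf_left N (wedge2_mono_s2 hA'A)))
  · exact (map_mono inf_le_right).trans <| (hF.map_wedge2_le A').trans <|
      wedge2_mono_s2 (sup_le (hA'A.trans le_sup_left) le_sup_right)

end Tilde

theorem statement2_general {K : Type u} [Field K] {W : Type v} [AddCommGroup W] [Module K W]
    (A B : Submodule K W) [FiniteDimensional K ↥A]
    (hBA : B ≤ A)
    (f : W →ₗ[K] W)
    (hgen : ∀ a ∈ A, f a ∈ A ⊔ Submodule.map f B → a ∈ B)
    (F : ExteriorAlgebra K W →ₗ[K] ExteriorAlgebra K W)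
    (hF : ∀ x y : W,
      F (ExteriorAlgebra.ι K x * ExteriorAlgebra.ι K y) =
        ExteriorAlgebra.ι K (f x) * ExteriorAlgebra.ι K y +
          ExteriorAlgebra.ι K x * ExteriorAlgebra.ι K (f y))
    (N : Submodule K (ExteriorAlgebra K W))
    (hNB : Submodule.map F (N ⊓ wedge2 K B) ≤ N ⊓ wedge2 K (B ⊔ Submodule.map f B))
    (A' : Submodule K W) (hBA' : B ≤ A') (hA'A : A' ≤ A) :
    let S : Submodule K W := A ⊔ Submodule.map f B
    let S' : Submodule K W := A ⊔ Submodule.map f A'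
    let N' : Submodule K (ExteriorAlgebra K W) :=
      (N ⊓ wedge2 K S) ⊔ Submodule.map F (N ⊓ wedge2 K A)
    (N' ⊓ wedge2 K S' = (N ⊓ wedge2 K S) ⊔ Submodule.map F (N ⊓ wedge2 K A')) ∧
    (∀ (t : ℕ) (e : Fin t → ExteriorAlgebra K W),
      (∀ i, e i ∈ N ⊓ wedge2 K A') →
      (∀ c : Fin t → K, (∑ i, c i • e i) ∈ N ⊓ wedge2 K B → ∀ i, c i = 0) →
      (N ⊓ wedge2 K A' ≤ (N ⊓ wedge2 K B) ⊔ Submodule.span K (Set.range e)) →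
      ((∀ i, F (e i) ∈ N' ⊓ wedge2 K S') ∧
        (∀ c : Fin t → K, (∑ i, c i • F (e i)) ∈ N ⊓ wedge2 K S → ∀ i, c i = 0) ∧
        N' ⊓ wedge2 K S' ≤
          (N ⊓ wedge2 K S) ⊔ Submodule.span K (Set.range fun i => F (e i)))) ∧
    (fdim K (N ⊓ wedge2 K S) (N' ⊓ wedge2 K S') = fdim K (N ⊓ wedge2 K B) (N ⊓ wedge2 K A') ∧
      pdim K N' S S' = pdim K N B A') := by
  intro S S' N'
  have hN'S' : N' ⊓ wedge2 K S' = (N ⊓ wedge2 K S) ⊔ (N ⊓ wedge2 K A').map F :=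
    inf_wedge2_sup_map_eq hF hgen hBA' hA'A N
  have hFB : (N ⊓ wedge2 K B).map F ≤ N ⊓ wedge2 K S :=
    hNB.trans (inf_le_inf_left N (wedge2_mono_s2 (sup_le_sup_right hBA _)))
  have hN'S : N' ⊓ wedge2 K S = N ⊓ wedge2 K S := by
    rw [inf_wedge2_sup_map_eq hF hgen le_rfl hBA N, sup_eq_left.2 hFB]
  have hF_free : ∀ m ∈ N ⊓ wedge2 K A', F m ∈ N ⊓ wedge2 K S → m ∈ N ⊓ wedge2 K B :=
    fun m hm hFm => ⟨hm.1, mem_wedge2_of_map_mem_wedge2 hF hBA hgen (wedge2_mono_s2 hA'A hm.2) hFm.2⟩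
  have : FiniteDimensional K A' := Submodule.finiteDimensional_of_le hA'A
  have hdimN := fdim_eq_of_map F hF_free hFB hN'S'
  refine ⟨hN'S', fun t e he₁ he₂ he₃ => ?_, hdimN, ?_⟩
  · have he := IsBasisMod.map ⟨he₁, he₂, he₃⟩ F hF_free hFB hN'S'
    exact ⟨he.mem, he.eq_zero_of_sum_mem, he.le_sup_span⟩
  · have hS' : S' = S ⊔ A'.map f := by
      rw [sup_assoc, sup_eq_right.2 (map_mono hBA' : B.map f ≤ A'.map f)]
    have hdim := fdim_eq_of_map f (fun a ha => hgen a (hA'A ha)) le_sup_right hS'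
    rw [pdim, pdim, hN'S, hdimN, hdim]

/-- in the free pseudosolution setup, with `N' = N(A+f(B)) + f̃(N(A))` and
`N'(X) = N' ∩ ⋀²X`, for every `B ⊆ A' ⊆ A`:
(1) `N'(A+f(A')) = N(A+f(B)) + f̃(N(A'))`;
(2) `f̃` sends any basis of `N(A')` modulo `N(B)` to a basis of `N'(A+f(A'))` modulo
    `N(A+f(B))`;
(3) `dim(N'(A+f(A'))/N(A+f(B))) = dim(N(A')/N(B))` and `δ(A+f(A')/A+f(B)) = δ(A'/B)`,
    the left-hand predimension being computed with respect to `N'`. -/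
theorem statement2 {K : Type u} [Field K] {W : Type v} [AddCommGroup W] [Module K W]
    (V A B : Submodule K W) [FiniteDimensional K ↥A]
    (hBA : B ≤ A) (hAV : A ≤ V)
    (f : W →ₗ[K] W) (hfB : ∀ b ∈ B, f b ∈ V)
    (hgen : ∀ a ∈ A, f a ∈ A ⊔ Submodule.map f B → a ∈ B)
    (F : ExteriorAlgebra K W →ₗ[K] ExteriorAlgebra K W)
    (hF : ∀ x y : W,
      F (ExteriorAlgebra.ι K x * ExteriorAlgebra.ι K y) =
        ExteriorAlgebra.ι K (f x) * ExteriorAlgebra.ι K y +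
          ExteriorAlgebra.ι K x * ExteriorAlgebra.ι K (f y))
    (N : Submodule K (ExteriorAlgebra K W)) (hNV : N ≤ wedge2 K V)
    (hNB : Submodule.map F (N ⊓ wedge2 K B) ≤ N ⊓ wedge2 K (B ⊔ Submodule.map f B))
    (A' : Submodule K W) (hBA' : B ≤ A') (hA'A : A' ≤ A) :
    let S : Submodule K W := A ⊔ Submodule.map f B
    let S' : Submodule K W := A ⊔ Submodule.map f A'
    let N' : Submodule K (ExteriorAlgebra K W) :=
      (N ⊓ wedge2 K S) ⊔ Submodule.map F (N ⊓ wedge2 K A)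
    (N' ⊓ wedge2 K S' = (N ⊓ wedge2 K S) ⊔ Submodule.map F (N ⊓ wedge2 K A')) ∧
    (∀ (t : ℕ) (e : Fin t → ExteriorAlgebra K W),
      (∀ i, e i ∈ N ⊓ wedge2 K A') →
      (∀ c : Fin t → K, (∑ i, c i • e i) ∈ N ⊓ wedge2 K B → ∀ i, c i = 0) →
      (N ⊓ wedge2 K A' ≤ (N ⊓ wedge2 K B) ⊔ Submodule.span K (Set.range e)) →
      ((∀ i, F (e i) ∈ N' ⊓ wedge2 K S') ∧
        (∀ c : Fin t → K, (∑ i, c i • F (e i)) ∈ N ⊓ wedge2 K S → ∀ i, c i = 0) ∧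
        N' ⊓ wedge2 K S' ≤
          (N ⊓ wedge2 K S) ⊔ Submodule.span K (Set.range fun i => F (e i)))) ∧
    (fdim K (N ⊓ wedge2 K S) (N' ⊓ wedge2 K S') = fdim K (N ⊓ wedge2 K B) (N ⊓ wedge2 K A') ∧
      pdim K N' S S' = pdim K N B A') :=
  statement2_general A B hBA f hgen F hF N hNB A' hBA' hA'A
end
end

section
/- In the free pseudosolution setup, set N' = N(A+f(B)) + f̃(N(A)) ⊆ ⋀²(A+f(A)). If C is a subspace of A+f(A) with C ∩ (A+f(B)) = {0}, then N' ∩ ⋀²C = {0}; in particular, if C is finite-dimensional then dim C − dim(N' ∩ ⋀²C) = dim C. -/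
/-!
Common notions: for a subspace `A` of an ambient `K`-vector space `M`, `wedge2 K A` is the
image of the exterior square `⋀² A` inside the exterior algebra of `M` (the span of the
products `a ∧ b` for `a, b ∈ A`).  For subspaces `C`, `B`, `fdim K C B` (resp. `cdim K C B`)
is the dimension of `B` over `C`, i.e. of the quotient `B / (C ∩ B)`, as a natural number
(resp. as a cardinal), and `FinOver K C B` says that `B` is finite-dimensional over `C`.
Relative to a fixed subspace `N` of `⋀² M`, writing `N(X) := N ⊓ wedge2 K X`,
`pdim K N C B` is the relative predimension `δ(B/C) = dim(B/C) - dim(N(B)/N(C))` and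
`pdim0 K N A = δ(A) = dim A - dim N(A)`.  `Strong K N B A` says that `B` is strong
(self-sufficient) in `A`:  `δ(C/B) ≥ 0` (stated in the equivalent subtraction-free form
`dim(N(C)/N(B)) ≤ dim(C/B)`) for every intermediate subspace `C` finite-dimensional over
`B`; `MinStrong K N B A` says that `A` is a minimal strong extension of `B`.
-/

noncomputable section

universe u v

variable (K : Type u) [Field K] {M : Type v} [AddCommGroup M] [Module K M]

/-- in the free pseudosolution setup, with `N' = N(A+f(B)) + f̃(N(A))`, any
subspace `C` of `A+f(A)` with `C ∩ (A+f(B)) = 0` satisfies `N' ∩ ⋀²C = 0`; in particular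
if `C` is finite-dimensional then `dim C - dim (N' ∩ ⋀²C) = dim C`. -/
theorem statement6 {K : Type u} [Field K] {W : Type v} [AddCommGroup W] [Module K W]
    (V A B : Submodule K W) [FiniteDimensional K ↥A]
    (hBA : B ≤ A) (hAV : A ≤ V)
    (f : W →ₗ[K] W) (hfB : ∀ b ∈ B, f b ∈ V)
    (hgen : ∀ a ∈ A, f a ∈ A ⊔ Submodule.map f B → a ∈ B)
    (F : ExteriorAlgebra K W →ₗ[K] ExteriorAlgebra K W)
    (hF : ∀ x y : W,
      F (ExteriorAlgebra.ι K x * ExteriorAlgebra.ι K y) =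
        ExteriorAlgebra.ι K (f x) * ExteriorAlgebra.ι K y +
          ExteriorAlgebra.ι K x * ExteriorAlgebra.ι K (f y))
    (N : Submodule K (ExteriorAlgebra K W)) (hNV : N ≤ wedge2 K V) :
    let N' : Submodule K (ExteriorAlgebra K W) :=
      (N ⊓ wedge2 K (A ⊔ Submodule.map f B)) ⊔ Submodule.map F (N ⊓ wedge2 K A)
    ∀ C : Submodule K W, C ≤ A ⊔ Submodule.map f A → C ⊓ (A ⊔ Submodule.map f B) = ⊥ →
      (N' ⊓ wedge2 K C = ⊥ ∧
        (FiniteDimensional K ↥C →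
          (Module.finrank K ↥C : ℤ) - (Module.finrank K ↥(N' ⊓ wedge2 K C) : ℤ) =
            (Module.finrank K ↥C : ℤ))) := by
  intro N' C hCA hC0
  classical
  set S : Submodule K W := A ⊔ Submodule.map f B with hSdef
  -- the map C → W/S is injective
  have hinj : LinearMap.ker ((S.mkQ).comp C.subtype) = ⊥ := by
    rw [LinearMap.ker_eq_bot']
    intro c hc
    have hcS : (c : W) ∈ S := by
      simpa [Submodule.Quotient.mk_eq_zero] using hc
    have : (c : W) ∈ C ⊓ S := ⟨c.2, hcS⟩
    rw [hC0] at this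
    exact Subtype.ext this
  obtain ⟨g, hg⟩ := LinearMap.exists_leftInverse_of_injective _ hinj
  set p : W →ₗ[K] W := C.subtype ∘ₗ g ∘ₗ S.mkQ with hpdef
  have hpS : ∀ s ∈ S, p s = 0 := by
    intro s hs
    have : S.mkQ s = 0 := (Submodule.Quotient.mk_eq_zero S).2 hs
    simp [hpdef, this]
  have hpC : ∀ c ∈ C, p c = c := by
    intro c hc
    have := LinearMap.congr_fun hg ⟨c, hc⟩
    have : g (S.mkQ c) = ⟨c, hc⟩ := this
    simp only [hpdef, LinearMap.coe_comp, Function.comp_apply, Submodule.coe_subtype,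
      Submodule.mkQ_apply] at this ⊢
    rw [this]
  set P : ExteriorAlgebra K W →ₐ[K] ExteriorAlgebra K W := ExteriorAlgebra.map p with hPdef
  -- P is identity on wedge2 C
  have hPC : ∀ z ∈ wedge2 K C, P z = z := by
    intro z hz
    induction hz using Submodule.span_induction with
    | mem x hx =>
        obtain ⟨a, ha, b, hb, rfl⟩ := hx
        simp [hPdef, ExteriorAlgebra.map_apply_ι, hpC a ha, hpC b hb]
    | zero => simp
    | add x y hx hy ihx ihy => simp [map_add, ihx, ihy]
    | smul t x hx ihx => simp [map_smul, ihx]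
  -- P kills wedge2 S
  have hPS : ∀ z ∈ wedge2 K S, P z = 0 := by
    intro z hz
    induction hz using Submodule.span_induction with
    | mem x hx =>
        obtain ⟨a, ha, b, hb, rfl⟩ := hx
        simp [hPdef, ExteriorAlgebra.map_apply_ι, hpS a ha, hpS b hb]
    | zero => simp
    | add x y hx hy ihx ihy => simp [map_add, ihx, ihy]
    | smul t x hx ihx => simp [map_smul, ihx]
  -- P kills F of wedge2 A
  have hPFA : ∀ z ∈ wedge2 K A, P (F z) = 0 := by
    intro z hz
    induction hz using Submodule.span_induction with
    | mem x hx =>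
        obtain ⟨a, ha, b, hb, rfl⟩ := hx
        have haS : a ∈ S := le_sup_left (α := Submodule K W) ha
        have hbS : b ∈ S := le_sup_left (α := Submodule K W) hb
        rw [hF a b]
        simp [hPdef, ExteriorAlgebra.map_apply_ι, hpS a haS, hpS b hbS]
    | zero => simp
    | add x y hx hy ihx ihy => simp [map_add, ihx, ihy]
    | smul t x hx ihx => simp [map_smul, ihx]
  have hbot : N' ⊓ wedge2 K C = ⊥ := by
    rw [eq_bot_iff]
    rintro z ⟨hzN', hzC⟩
    obtain ⟨x, hx, y, hy, rfl⟩ := Submodule.mem_sup.1 hzN'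
    obtain ⟨n, hn, rfl⟩ := hy
    have h1 : P x = 0 := hPS x hx.2
    have h2 : P (F n) = 0 := hPFA n hn.2
    have : x + F n = P (x + F n) := (hPC _ hzC).symm
    rw [map_add, h1, h2, add_zero] at this
    simp [this]
  refine ⟨hbot, fun _ => ?_⟩
  rw [hbot, finrank_bot]
  simp

end
end
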